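/- arXiv:2006.05607 — 2 statements merged into one kernel-verified Lean document; each statement's English description precedes it below -/
import Mathlib

section
/- Every strongly connected semicomplete composition Q = T[H_1, ..., H_t] has at least two 3-kings. -/
/-- There is a directed walk (equivalently, path) of length at most `k` from `x` to `y`. -/
def KReach {V : Type*} (A : V → V → Prop) (k : ℕ) (x y : V) : Prop :=
  ∃ n : ℕ, n ≤ k ∧ ∃ f : ℕ → V, f 0 = x ∧ f n = y ∧ ∀ i < n, A (f i) (f (i + 1))

/-- `x` is a `k`-king: it reaches every vertex by a path of length at most `k`. -/
def IsKKing {V : Type*} (A : V → V → Prop) (k : ℕ) (x : V) : Prop :=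
  ∀ y : V, KReach A k x y

/-- A strict `k`-king: a `k`-king with some vertex at distance exactly `k`. -/
def IsStrictKKing {V : Type*} (A : V → V → Prop) (k : ℕ) (x : V) : Prop :=
  IsKKing A k x ∧ ∃ y : V, ¬ KReach A (k - 1) x y

/-- Strong connectivity of a digraph. -/
def Strong {V : Type*} (A : V → V → Prop) : Prop :=
  ∀ x y : V, ∃ k : ℕ, KReach A k x y

/-- Semicomplete digraph: at least one arc between any two distinct vertices. -/
def Semicomplete {V : Type*} (A : V → V → Prop) : Prop :=
  ∀ x y : V, x ≠ y → A x y ∨ A y x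

/-- Tournament: exactly one arc between any two distinct vertices, no loops. -/
def IsTournament {V : Type*} (A : V → V → Prop) : Prop :=
  Irreflexive A ∧ ∀ x y : V, x ≠ y → (A x y ↔ ¬ A y x)

/-- Out-degree of a vertex. -/
noncomputable def outDeg {V : Type*} (A : V → V → Prop) (x : V) : ℕ :=
  Set.ncard {y | A x y}

/-- There is a directed cycle of length exactly `k` through `x`. -/
def CycleThrough {V : Type*} (A : V → V → Prop) (k : ℕ) (x : V) : Prop :=
  ∃ f : ℕ → V, f 0 = x ∧ f k = x ∧ (∀ i < k, A (f i) (f (i + 1))) ∧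
    ∀ i j, i < k → j < k → f i = f j → i = j

/-- `x` belongs to a directed cycle of length at most `k`. -/
def OnShortCycle {V : Type*} (A : V → V → Prop) (k : ℕ) (x : V) : Prop :=
  ∃ n : ℕ, 2 ≤ n ∧ n ≤ k ∧ CycleThrough A n x

/-- `AQ` (on `W`) is the composition `T[H_1, …, H_t]` of digraphs over the digraph `AT`
(on index type `ι`), where the fiber of `π` over `i` is the vertex set of `H_i`
(each fiber is nonempty since `π` is surjective), the arcs of `H_i` are the arcs of
`AQ` inside the fiber over `i`, and arcs between different fibers are determined by `AT`. -/
structure IsComposition {ι W : Type*} (AT : ι → ι → Prop) (AQ : W → W → Prop)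
    (π : W → ι) : Prop where
  surj : Function.Surjective π
  cross : ∀ x y : W, π x ≠ π y → (AQ x y ↔ AT (π x) (π y))

/-- The digraph `H_i`: the induced subdigraph on the fiber of `π` over `i`. -/
def FiberArc {ι W : Type*} (AQ : W → W → Prop) (π : W → ι) (i : ι) :
    {w : W // π w = i} → {w : W // π w = i} → Prop :=
  fun a b => AQ a.1 b.1

/-- The induced subdigraph on the vertices satisfying `P`. -/
def DelArc {V : Type*} (A : V → V → Prop) (P : V → Prop) :
    {v : V // P v} → {v : V // P v} → Prop :=
  fun a b => A a.1 b.1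

/-- `{v}` is a `k`-absorbent set: every other vertex reaches `v` in at most `k` steps. -/
def SingletonAbsorbent {V : Type*} (A : V → V → Prop) (k : ℕ) (v : V) : Prop :=
  ∀ x : V, x ≠ v → KReach A k x v

/-- A quasi-kernel: an independent set `K` such that every vertex outside `K`
reaches some vertex of `K` by a path of length at most 2. -/
def QuasiKernel {V : Type*} (A : V → V → Prop) (K : Set V) : Prop :=
  (∀ x ∈ K, ∀ y ∈ K, x ≠ y → ¬ A x y) ∧ ∀ x ∉ K, ∃ y ∈ K, KReach A 2 x y

/-- A `k`-kernel: a `k`-independent and `(k-1)`-absorbent set. -/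
def KKernel {V : Type*} (A : V → V → Prop) (k : ℕ) (K : Set V) : Prop :=
  (∀ x ∈ K, ∀ y ∈ K, x ≠ y → ¬ KReach A (k - 1) x y) ∧
    ∀ x ∉ K, ∃ y ∈ K, KReach A (k - 1) x y


/-!
In a strong semicomplete digraph `T` with at least two vertices, a vertex `u` of maximum
out-degree is a 2-king, and so is any 2-king `v` of the subdigraph induced by the in-neighbours
of `u`, since `v` reaches the remaining vertices through `u`.
A vertex `x` of `Q` lying over a 2-king `i` of `T` is a 3-king of `Q`: a vertex over `j ≠ i` is
reached by lifting a path of length at most 2 from `i` to `j`, and a vertex in the fiber of `i`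
itself by going to an out-neighbour `q` of `i` lying on a closed walk `i → q → … → i` of length
at most 3, which exists because `i` reaches each of its in-neighbours within 2 steps.
-/

section KReach

variable {V : Type*} {A : V → V → Prop} {k : ℕ} {x y : V}

theorem kreach_zero_iff : KReach A 0 x y ↔ x = y := by
  constructor
  · rintro ⟨n, hn, f, rfl, rfl, -⟩
    rw [Nat.le_zero.mp hn]
  · rintro rfl
    exact ⟨0, le_rfl, fun _ => x, rfl, rfl, by simp⟩

theorem kreach_succ_iff : KReach A (k + 1) x y ↔ x = y ∨ ∃ z, A x z ∧ KReach A k z y := by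
  constructor
  · rintro ⟨_ | n, hn, f, rfl, rfl, hf⟩
    · exact Or.inl rfl
    · refine Or.inr ⟨f 1, hf 0 (by omega), n, by omega, fun i => f (i + 1), rfl, rfl, ?_⟩
      exact fun i hi => hf (i + 1) (by omega)
  · rintro (rfl | ⟨z, hxz, n, hn, f, rfl, rfl, hf⟩)
    · exact ⟨0, by omega, fun _ => x, rfl, rfl, by simp⟩
    · refine ⟨n + 1, by omega, fun i => if i = 0 then x else f (i - 1), rfl, by simp, ?_⟩
      rintro (_ | i) hi
      · simpa using hxz
      · simpa using hf i (by omega)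

theorem KReach.refl (A : V → V → Prop) (k : ℕ) (x : V) : KReach A k x x :=
  ⟨0, k.zero_le, fun _ => x, rfl, rfl, by simp⟩

theorem KReach.cons {z : V} (hxz : A x z) (h : KReach A k z y) : KReach A (k + 1) x y :=
  kreach_succ_iff.mpr (Or.inr ⟨z, hxz, h⟩)

theorem KReach.mono {k' : ℕ} (h : KReach A k x y) (hk : k ≤ k') : KReach A k' x y :=
  let ⟨n, hn, hf⟩ := h
  ⟨n, hn.trans hk, hf⟩

theorem KReach.snoc {z : V} (h : KReach A k x y) (hyz : A y z) : KReach A (k + 1) x z := by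
  induction k generalizing x with
  | zero => exact kreach_zero_iff.mp h ▸ KReach.cons hyz (KReach.refl A 0 z)
  | succ k ih =>
    obtain rfl | ⟨w, hxw, hwy⟩ := kreach_succ_iff.mp h
    · exact (KReach.cons hyz (KReach.refl A 0 z)).mono (by omega)
    · exact KReach.cons hxw (ih hwy)

theorem KReach.map {V' : Type*} {B : V' → V' → Prop} (φ : V → V')
    (hφ : ∀ a b, A a b → B (φ a) (φ b)) (h : KReach A k x y) : KReach B k (φ x) (φ y) :=
  let ⟨n, hn, f, hf0, hfn, hf⟩ := h
  ⟨n, hn, φ ∘ f, by simp [hf0], by simp [hfn], fun i hi => hφ _ _ (hf i hi)⟩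

theorem KReach.reflTransGen (h : KReach A k x y) : Relation.ReflTransGen A x y := by
  induction k generalizing x with
  | zero => rw [kreach_zero_iff.mp h]
  | succ k ih =>
    obtain rfl | ⟨z, hxz, hzy⟩ := kreach_succ_iff.mp h
    · exact .refl
    · exact .head hxz (ih hzy)

theorem ne_of_adj (hirr : Irreflexive A) (h : A x y) : x ≠ y :=
  fun e => hirr y (e ▸ h)

theorem exists_adj_of_reflTransGen (hA : ∀ a b, Relation.ReflTransGen A a b) {i j : V}
    (hji : j ≠ i) : ∃ a, A a i := by
  obtain rfl | ⟨a, -, hai⟩ := (hA j i).cases_tail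
  · exact absurd rfl hji
  · exact ⟨a, hai⟩

end KReach

section Semicomplete

variable {V : Type*} {A : V → V → Prop}

/-- If `v` reached `y` by no path of length at most 2, then `y → v` and every out-neighbour of `v`
would be an out-neighbour of `y`, so `y` would have larger out-degree. -/
theorem isKKing_two_of_forall_outDeg_le [Finite V] (hirr : Irreflexive A)
    (hsemi : Semicomplete A) {v : V} (hmax : ∀ w, outDeg A w ≤ outDeg A v) :
    IsKKing A 2 v := by
  intro y
  by_contra hfar
  have hvy : ¬ A v y := fun h => hfar ((KReach.cons h (KReach.refl A 0 y)).mono (by omega))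
  have hvzy : ∀ z, A v z → ¬ A z y := fun z hvz hzy =>
    hfar (KReach.cons hvz (KReach.cons hzy (KReach.refl A 0 y)))
  have hyv : A y v :=
    (hsemi v y fun h => hfar (h ▸ KReach.refl A 2 v)).resolve_left hvy
  have hsub : {z | A v z} ⊂ {z | A y z} := by
    refine ⟨fun z hvz => ?_, fun hle => hirr v (hle hyv)⟩
    exact (hsemi z y fun h => hvy (h ▸ hvz)).resolve_left (hvzy z hvz)
  exact absurd (hmax y) (not_le.mpr (Set.ncard_lt_ncard hsub (Set.toFinite _)))

theorem exists_isKKing_two [Finite V] [Nonempty V] (hirr : Irreflexive A)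
    (hsemi : Semicomplete A) : ∃ v, IsKKing A 2 v :=
  let ⟨v, hv⟩ := Finite.exists_max (outDeg A)
  ⟨v, isKKing_two_of_forall_outDeg_le hirr hsemi hv⟩

theorem exists_adj_isKKing_two [Finite V] (hirr : Irreflexive A) (hsemi : Semicomplete A)
    {a u : V} (hau : A a u) : ∃ v, A v u ∧ IsKKing A 2 v := by
  have : Nonempty {w // A w u} := ⟨⟨a, hau⟩⟩
  obtain ⟨v, hv⟩ := exists_isKKing_two (A := DelArc A (A · u))
    (fun w => hirr w.1) (fun w w' hne => hsemi w.1 w'.1 (Subtype.coe_ne_coe.mpr hne))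
  refine ⟨v.1, v.2, fun y => ?_⟩
  by_cases hyu : y = u
  · subst hyu
    exact (KReach.cons v.2 (KReach.refl A 0 _)).mono (by omega)
  by_cases hy : A y u
  · exact (hv ⟨y, hy⟩).map Subtype.val fun _ _ h => h
  · exact KReach.cons v.2 (KReach.cons ((hsemi y u hyu).resolve_left hy) (KReach.refl A 0 y))

end Semicomplete

namespace IsComposition

variable {ι W : Type*} {AT : ι → ι → Prop} {AQ : W → W → Prop} {π : W → ι}

theorem reflTransGen_map (hc : IsComposition AT AQ π) {x y : W}
    (h : Relation.ReflTransGen AQ x y) : Relation.ReflTransGen AT (π x) (π y) := by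
  refine h.lift' π fun a b hab => show Relation.ReflTransGen AT (π a) (π b) from ?_
  by_cases hne : π a = π b
  · rw [hne]
  · exact .single ((hc.cross a b hne).mp hab)

theorem kreach_lift (hirr : Irreflexive AT) (hc : IsComposition AT AQ π) {k : ℕ} {x y : W}
    (h : KReach AT k (π x) (π y)) (hne : π x ≠ π y) : KReach AQ k x y := by
  induction k generalizing x with
  | zero => exact absurd (kreach_zero_iff.mp h) hne
  | succ k ih =>
    obtain heq | ⟨j, hxj, hjy⟩ := kreach_succ_iff.mp h
    · exact absurd heq hne
    by_cases hj : j = π y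
    · subst hj
      exact KReach.cons ((hc.cross x y hne).mpr hxj) (KReach.refl AQ k y)
    obtain ⟨z, rfl⟩ := hc.surj j
    exact KReach.cons ((hc.cross x _ (ne_of_adj hirr hxj)).mpr hxj) (ih hjy hj)

theorem isKKing_three (hirr : Irreflexive AT) (hc : IsComposition AT AQ π) {x : W}
    (hking : IsKKing AT 2 (π x)) (hin : ∃ w, AT w (π x)) : IsKKing AQ 3 x := by
  intro y
  obtain hxy | hxy := ne_or_eq (π x) (π y)
  · exact (hc.kreach_lift hirr (hking (π y)) hxy).mono (by omega)
  obtain ⟨w, hw⟩ := hin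
  have hback : ∃ q, AT (π x) q ∧ KReach AT 2 q (π x) := by
    obtain heq | ⟨q, hxq, hqw⟩ := kreach_succ_iff.mp (hking w)
    · exact absurd (heq ▸ hw) (hirr w)
    · exact ⟨q, hxq, hqw.snoc hw⟩
  obtain ⟨q, hxq, hqx⟩ := hback
  obtain ⟨z, rfl⟩ := hc.surj q
  have hxz : π x ≠ π z := ne_of_adj hirr hxq
  exact KReach.cons ((hc.cross x z hxz).mpr hxq)
    (hc.kreach_lift hirr (hxy ▸ hqx) (hxy ▸ hxz.symm))

end IsComposition

theorem stmt9_general {ι W : Type*} [Fintype ι]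
    (AT : ι → ι → Prop) (AQ : W → W → Prop) (π : W → ι)
    (hcard : 2 ≤ Fintype.card ι)
    (hTirr : Irreflexive AT)
    (hsemi : Semicomplete AT) (hcomp : IsComposition AT AQ π)
    (hstrong : Strong AQ) :
    ∃ x y : W, x ≠ y ∧ IsKKing AQ 3 x ∧ IsKKing AQ 3 y := by
  have hTstrong : ∀ i j, Relation.ReflTransGen AT i j := by
    intro i j
    obtain ⟨x, rfl⟩ := hcomp.surj i
    obtain ⟨y, rfl⟩ := hcomp.surj j
    obtain ⟨k, hk⟩ := hstrong x y
    exact hcomp.reflTransGen_map hk.reflTransGen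
  have hin : ∀ i, ∃ w, AT w i := fun i =>
    let ⟨j, hj⟩ := Fintype.exists_ne_of_one_lt_card hcard i
    exists_adj_of_reflTransGen hTstrong hj
  have : Nonempty ι := Fintype.card_pos_iff.mp (by omega)
  obtain ⟨u, hu⟩ := exists_isKKing_two hTirr hsemi
  obtain ⟨a, hau⟩ := hin u
  obtain ⟨v, hvu, hv⟩ := exists_adj_isKKing_two hTirr hsemi hau
  obtain ⟨x, rfl⟩ := hcomp.surj u
  obtain ⟨y, rfl⟩ := hcomp.surj v
  exact ⟨x, y, fun h => ne_of_adj hTirr hvu (congrArg π h).symm,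
    hcomp.isKKing_three hTirr hu (hin _), hcomp.isKKing_three hTirr hv (hin _)⟩

/-- Every strongly connected semicomplete composition has at least two 3-kings. -/
theorem stmt9 {ι W : Type*} [Fintype ι] [Fintype W]
    (AT : ι → ι → Prop) (AQ : W → W → Prop) (π : W → ι)
    (hcard : 2 ≤ Fintype.card ι)
    (hTirr : Irreflexive AT) (hQirr : Irreflexive AQ)
    (hsemi : Semicomplete AT) (hcomp : IsComposition AT AQ π)
    (hstrong : Strong AQ) :
    ∃ x y : W, x ≠ y ∧ IsKKing AQ 3 x ∧ IsKKing AQ 3 y :=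
  stmt9_general AT AQ π hcard hTirr hsemi hcomp hstrong
end

section
/- Let Q = T[H_1, ..., H_t] be a strongly connected semicomplete composition and k ≥ 4. Then Q has a k-kernel if and only if there is a vertex v ∈ V(Q), say v ∈ V(H_i), such that {v} is a (k−1)-absorbent set of Q − (V(H_i) \ {v}). -/
/-!
Any two vertices of `Q` are at distance at most `3` in one direction: vertices in different
fibres are joined by an arc, and a vertex `v` of `H_i` is reached from every other vertex of
`H_i` along a cycle of length `2` or `3` through `u_i`, which exists in the strong
semicomplete digraph `T`. Since `k - 1 ≥ 3`, a `k`-kernel is therefore a single vertex `v`,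
and a path reaching `v` may be cut at its first entry into `H_i`, because every arc entering
`H_i` from outside can be redirected to `v`.
-/

namespace KReach

variable {V : Type*} {A : V → V → Prop} {k m : ℕ} {x y z : V}

theorem mono_s18 (h : KReach A k x y) (hkm : k ≤ m) : KReach A m x y := by
  obtain ⟨n, hn, f, hf⟩ := h
  exact ⟨n, hn.trans hkm, f, hf⟩

theorem refl_s18 (k : ℕ) (x : V) : KReach A k x x :=
  ⟨0, k.zero_le, fun _ => x, rfl, rfl, fun _ h => absurd h (Nat.not_lt_zero _)⟩

theorem eq_of_zero (h : KReach A 0 x y) : x = y := by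
  obtain ⟨n, hn, f, h0, h1, -⟩ := h
  obtain rfl : n = 0 := by omega
  exact h0 ▸ h1

theorem cons_s18 (hxy : A x y) (h : KReach A k y z) : KReach A (k + 1) x z := by
  obtain ⟨n, hn, f, h0, h1, harc⟩ := h
  refine ⟨n + 1, by omega, fun i => Nat.casesOn i x f, rfl, h1, ?_⟩
  rintro (_ | i) hi
  · show A x (f 0)
    exact h0 ▸ hxy
  · exact harc i (by omega)

theorem succ_cases (h : KReach A (k + 1) x y) : x = y ∨ ∃ z, A x z ∧ KReach A k z y := by
  obtain ⟨_ | n, hn, f, h0, h1, harc⟩ := h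
  · exact .inl (h0 ▸ h1)
  · exact .inr ⟨f 1, h0 ▸ harc 0 (by omega), n, by omega, fun i => f (i + 1), rfl, h1,
      fun i hi => harc (i + 1) (by omega)⟩

theorem single (h : A x y) (hk : 1 ≤ k) : KReach A k x y :=
  (cons_s18 h (refl_s18 0 y)).mono_s18 hk

theorem map_s18 {U : Type*} {B : U → U → Prop} (f : V → U) (hf : ∀ a b, A a b → B (f a) (f b))
    (h : KReach A k x y) : KReach B k (f x) (f y) := by
  obtain ⟨n, hn, g, h0, h1, harc⟩ := h
  exact ⟨n, hn, f ∘ g, by simp [h0], by simp [h1], fun i hi => hf _ _ (harc i hi)⟩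

theorem exists_arc_of_not {P : V → Prop} (h : KReach A k x y) (hx : P x) (hy : ¬ P y) :
    ∃ a b, P a ∧ ¬ P b ∧ A a b := by
  induction k generalizing x with
  | zero => exact absurd (h.eq_of_zero ▸ hx) hy
  | succ k ih =>
    rcases h.succ_cases with rfl | ⟨z, hxz, hz⟩
    · exact absurd hx hy
    · by_cases hPz : P z
      · exact ih hz hPz
      · exact ⟨x, z, hx, hPz, hxz⟩

theorem delArc_of_redirect {P : V → Prop} (hredirect : ∀ a b, ¬ P a → P b → A a b → A a y)
    (hy : P y) (h : KReach A k x y) (hx : ¬ P x) :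
    KReach (DelArc A fun w => P w → w = y) k ⟨x, fun h => absurd h hx⟩ ⟨y, fun _ => rfl⟩ := by
  induction k generalizing x with
  | zero => exact absurd (h.eq_of_zero ▸ hx) (not_not.2 hy)
  | succ k ih =>
    rcases h.succ_cases with rfl | ⟨z, hxz, hz⟩
    · exact absurd hy hx
    · by_cases hPz : P z
      · exact single (hredirect x z hx hPz hxz) (by omega)
      · exact cons_s18 (show DelArc A _ _ ⟨z, fun h => absurd h hPz⟩ from hxz) (ih hz hPz)

end KReach

section Kernel

variable {V : Type*} {A : V → V → Prop} {k : ℕ}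

theorem kKernel_singleton_iff {v : V} : KKernel A k {v} ↔ SingletonAbsorbent A (k - 1) v := by
  simp [KKernel, SingletonAbsorbent]

theorem KKernel.exists_eq_singleton [Nonempty V] {K : Set V} (hK : KKernel A k K)
    (hreach : ∀ x y, KReach A (k - 1) x y ∨ KReach A (k - 1) y x) : ∃ v, K = {v} := by
  refine Set.exists_eq_singleton_iff_nonempty_subsingleton.2 ⟨?_, ?_⟩
  · obtain ⟨x⟩ := ‹Nonempty V›
    by_cases hx : x ∈ K
    · exact ⟨x, hx⟩
    · obtain ⟨y, hy, -⟩ := hK.2 x hx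
      exact ⟨y, hy⟩
  · intro x hx y hy
    by_contra hxy
    rcases hreach x y with h | h
    · exact hK.1 x hx y hy hxy h
    · exact hK.1 y hy x hx (Ne.symm hxy) h

theorem exists_kKernel_iff [Nonempty V]
    (hreach : ∀ x y, KReach A (k - 1) x y ∨ KReach A (k - 1) y x) :
    (∃ K, KKernel A k K) ↔ ∃ v, SingletonAbsorbent A (k - 1) v := by
  constructor
  · rintro ⟨K, hK⟩
    obtain ⟨v, rfl⟩ := hK.exists_eq_singleton hreach
    exact ⟨v, kKernel_singleton_iff.1 hK⟩
  · rintro ⟨v, hv⟩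
    exact ⟨{v}, kKernel_singleton_iff.2 hv⟩

end Kernel

theorem Semicomplete.exists_short_cycle {ι : Type*} {A : ι → ι → Prop}
    (hsemi : Semicomplete A) (hirr : ∀ i, ¬ A i i) (hstrong : Strong A) {i j : ι}
    (hij : i ≠ j) : ∃ l, A i l ∧ KReach A 2 l i := by
  obtain ⟨m, him⟩ := hstrong i j
  obtain ⟨a, b, rfl, -, hab⟩ := him.exists_arc_of_not (P := (· = i)) rfl (Ne.symm hij)
  obtain ⟨m', hbi⟩ := hstrong b a
  -- the first arc of a path leaving the out-neighbourhood of `a` ends at `a` or dominates `a`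
  obtain ⟨l, c, hal, hac, hlc⟩ := hbi.exists_arc_of_not (P := A a) hab (hirr a)
  refine ⟨l, hal, ?_⟩
  by_cases hca : c = a
  · exact .single (hca ▸ hlc) (by norm_num)
  · rcases hsemi a c (Ne.symm hca) with h | h
    · exact absurd h hac
    · exact .cons hlc (.single h le_rfl)

namespace IsComposition

variable {ι W : Type*} {AT : ι → ι → Prop} {AQ : W → W → Prop} {π : W → ι} {k : ℕ}

theorem arc (hc : IsComposition AT AQ π) {x y : W} (hne : π x ≠ π y)
    (h : AT (π x) (π y)) : AQ x y :=
  (hc.cross x y hne).2 h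

theorem kReach_proj (hc : IsComposition AT AQ π) {x y : W} (h : KReach AQ k x y) :
    KReach AT k (π x) (π y) := by
  induction k generalizing x with
  | zero => exact h.eq_of_zero ▸ KReach.refl_s18 0 _
  | succ k ih =>
    rcases h.succ_cases with rfl | ⟨z, hxz, hz⟩
    · exact KReach.refl_s18 _ _
    · by_cases hxz' : π x = π z
      · exact (hxz' ▸ ih hz).mono_s18 k.le_succ
      · exact .cons ((hc.cross x z hxz').1 hxz) (ih hz)

theorem strong (hc : IsComposition AT AQ π) (h : Strong AQ) : Strong AT := by
  intro i j
  obtain ⟨x, rfl⟩ := hc.surj i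
  obtain ⟨y, rfl⟩ := hc.surj j
  obtain ⟨k, hk⟩ := h x y
  exact ⟨k, hc.kReach_proj hk⟩

theorem kReach_lift (hc : IsComposition AT AQ π) (hirr : ∀ i, ¬ AT i i) {x y : W}
    (h : KReach AT k (π x) (π y)) (hne : π x ≠ π y) : KReach AQ k x y := by
  induction k generalizing x with
  | zero => exact absurd h.eq_of_zero hne
  | succ k ih =>
    rcases h.succ_cases with h | ⟨c, hxc, hc'⟩
    · exact absurd h hne
    · by_cases hcy : c = π y
      · exact .single (hc.arc hne (hcy ▸ hxc)) (by omega)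
      · obtain ⟨z, rfl⟩ := hc.surj c
        have hxz : π x ≠ π z := fun h => hirr _ (h ▸ hxc)
        exact .cons (hc.arc hxz hxc) (ih hc' hcy)

theorem kReach_three_of_fiber [Nontrivial ι] (hc : IsComposition AT AQ π)
    (hirr : ∀ i, ¬ AT i i) (hsemi : Semicomplete AT) (hstrong : Strong AQ) {x v : W}
    (hxv : π x = π v) : KReach AQ 3 x v := by
  obtain ⟨j, hj⟩ := exists_ne (π v)
  obtain ⟨l, hvl, hlv⟩ := hsemi.exists_short_cycle hirr (hc.strong hstrong) hj.symm
  obtain ⟨w, rfl⟩ := hc.surj l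
  have hwv : π w ≠ π v := fun h => hirr _ (h ▸ hvl)
  rw [← hxv] at hvl
  exact .cons (hc.arc (hxv ▸ hwv.symm) hvl) (hc.kReach_lift hirr hlv hwv)

theorem kReach_three_or [Nontrivial ι] (hc : IsComposition AT AQ π) (hirr : ∀ i, ¬ AT i i)
    (hsemi : Semicomplete AT) (hstrong : Strong AQ) (x y : W) :
    KReach AQ 3 x y ∨ KReach AQ 3 y x := by
  by_cases hxy : π x = π y
  · exact .inl (hc.kReach_three_of_fiber hirr hsemi hstrong hxy)
  · rcases hsemi _ _ hxy with h | h
    · exact .inl (.single (hc.arc hxy h) (by norm_num))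
    · exact .inr (.single (hc.arc (Ne.symm hxy) h) (by norm_num))

theorem singletonAbsorbent_delArc_iff (hc : IsComposition AT AQ π) {v : W}
    (hfiber : ∀ x, π x = π v → KReach AQ k x v) :
    SingletonAbsorbent (DelArc AQ fun w => π w = π v → w = v) k ⟨v, fun _ => rfl⟩ ↔
      SingletonAbsorbent AQ k v := by
  constructor
  · intro h x hxv
    by_cases hx : π x = π v
    · exact hfiber x hx
    · exact (h ⟨x, fun h => absurd h hx⟩ fun h => hxv (congrArg Subtype.val h)).map_s18
        Subtype.val fun _ _ h => h
  · rintro h ⟨x, hx⟩ hxv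
    have hx' : π x ≠ π v := fun h => hxv (Subtype.ext (hx h))
    refine KReach.delArc_of_redirect (P := fun w => π w = π v) ?_ rfl
      (h x fun h => hx' (h ▸ rfl)) hx'
    intro a b ha hb hab
    have hab' : π a ≠ π b := hb ▸ ha
    exact hc.arc ha (hb ▸ (hc.cross a b hab').1 hab)

end IsComposition

theorem stmt18_general {ι W : Type*} [Fintype ι] (k : ℕ) (hk : 4 ≤ k)
    (AT : ι → ι → Prop) (AQ : W → W → Prop) (π : W → ι)
    (hcard : 2 ≤ Fintype.card ι)
    (hTirr : Irreflexive AT)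
    (hsemi : Semicomplete AT) (hcomp : IsComposition AT AQ π)
    (hstrong : Strong AQ) :
    (∃ K : Set W, KKernel AQ k K) ↔
      ∃ v : W, SingletonAbsorbent
        (DelArc AQ (fun w => π w = π v → w = v)) (k - 1)
        ⟨v, fun _ => rfl⟩ := by
  have : Nontrivial ι := Fintype.one_lt_card_iff_nontrivial.1 hcard
  have : Nonempty W := hcomp.surj.nonempty
  have hreach : ∀ x y, KReach AQ (k - 1) x y ∨ KReach AQ (k - 1) y x := fun x y =>
    (hcomp.kReach_three_or hTirr hsemi hstrong x y).imp (·.mono (by omega)) (·.mono (by omega))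
  rw [exists_kKernel_iff hreach]
  exact exists_congr fun v => (hcomp.singletonAbsorbent_delArc_iff fun x hx =>
    (hcomp.kReach_three_of_fiber hTirr hsemi hstrong hx).mono_s18 (by omega)).symm

/-- A strong semicomplete composition has a `k`-kernel (`k ≥ 4`) iff there is a vertex
`v ∈ V(H_i)` such that `{v}` is `(k-1)`-absorbent in `Q − (V(H_i) \ {v})`. -/
theorem stmt18 {ι W : Type*} [Fintype ι] [Fintype W] (k : ℕ) (hk : 4 ≤ k)
    (AT : ι → ι → Prop) (AQ : W → W → Prop) (π : W → ι)
    (hcard : 2 ≤ Fintype.card ι)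
    (hTirr : Irreflexive AT) (hQirr : Irreflexive AQ)
    (hsemi : Semicomplete AT) (hcomp : IsComposition AT AQ π)
    (hstrong : Strong AQ) :
    (∃ K : Set W, KKernel AQ k K) ↔
      ∃ v : W, SingletonAbsorbent
        (DelArc AQ (fun w => π w = π v → w = v)) (k - 1)
        ⟨v, fun _ => rfl⟩ :=
  stmt18_general k hk AT AQ π hcard hTirr hsemi hcomp hstrong
end
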